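/- arXiv:2505.19724 — 5 statements merged into one kernel-verified Lean document; each statement's English description precedes it below -/
import Mathlib

section
/- Let f: ℝⁿ → ℝ, g: ℝⁿ → ℝᵐ, h: ℝⁿ → ℝᵖ be twice continuously differentiable, and let (x*, y*, z*) be a KKT point of the problem min f(x) s.t. g(x) ≥ 0, h(x) = 0. Assume strict complementarity (for each i exactly one of y*_i and g_i(x*) is zero), LICQ (the gradients {∇g_i(x*)}_{i ∈ A(x*)} ∪ {∇h_j(x*)} are linearly independent, where A(x*) = {i : g_i(x*) = 0}), and the second-order sufficient condition (⟨∇²ₓL(x*,y*,z*)v, v⟩ > 0 for all nonzero v in the critical cone). Then the KKT Jacobian, i.e., the linear map (dx, dy, dz) ↦ (∇²ₓL(x*,y*,z*)dx − ∑ᵢ dyᵢ∇gᵢ(x*) + ∑ⱼ dzⱼ∇hⱼ(x*), (y*_i ⟨∇gᵢ(x*), dx⟩ + dyᵢ gᵢ(x*))_i, (⟨∇hⱼ(x*), dx⟩)_j), is nonsingular. -/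
open Filter Topology
open scoped RealInnerProductSpace

theorem kkt_jacobian_nonsingular
    (n m p : ℕ)
    (f : EuclideanSpace ℝ (Fin n) → ℝ)
    (g : Fin m → EuclideanSpace ℝ (Fin n) → ℝ)
    (h : Fin p → EuclideanSpace ℝ (Fin n) → ℝ)
    (hf : ContDiff ℝ 2 f) (hg : ∀ i, ContDiff ℝ 2 (g i)) (hh : ∀ j, ContDiff ℝ 2 (h j))
    (xs : EuclideanSpace ℝ (Fin n)) (ys : Fin m → ℝ) (zs : Fin p → ℝ)
    -- the Lagrangian and its Hessian at (xs, ys, zs)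
    (L : EuclideanSpace ℝ (Fin n) → ℝ)
    (hL : L = fun x => f x - ∑ i, ys i * g i x + ∑ j, zs j * h j x)
    (Hess : EuclideanSpace ℝ (Fin n) →L[ℝ] EuclideanSpace ℝ (Fin n))
    (hHess : Hess = fderiv ℝ (fun x => gradient L x) xs)
    -- KKT conditions
    (hstat : gradient L xs = 0)
    (hfeas_g : ∀ i, 0 ≤ g i xs) (hfeas_h : ∀ j, h j xs = 0)
    (hmult : ∀ i, 0 ≤ ys i) (hcompl : ∀ i, ys i * g i xs = 0)
    -- strict complementarity
    (hSC : ∀ i, Xor' (ys i = 0) (g i xs = 0))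
    -- LICQ
    (hLICQ : LinearIndependent ℝ
      (fun k : {i : Fin m // g i xs = 0} ⊕ Fin p =>
        Sum.elim (fun i : {i : Fin m // g i xs = 0} => gradient (g i.1) xs)
          (fun j : Fin p => gradient (h j) xs) k))
    -- second-order sufficient condition on the critical cone
    (hSOSC : ∀ v : EuclideanSpace ℝ (Fin n), v ≠ 0 →
      (∀ i, g i xs = 0 → 0 < ys i → ⟪gradient (g i) xs, v⟫ = 0) →
      (∀ i, g i xs = 0 → ys i = 0 → 0 ≤ ⟪gradient (g i) xs, v⟫) →
      (∀ j, ⟪gradient (h j) xs, v⟫ = 0) →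
      0 < ⟪Hess v, v⟫) :
    Function.Bijective
      (fun w : EuclideanSpace ℝ (Fin n) × (Fin m → ℝ) × (Fin p → ℝ) =>
        ((Hess w.1 - ∑ i, w.2.1 i • gradient (g i) xs + ∑ j, w.2.2 j • gradient (h j) xs,
          fun i => ys i * ⟪gradient (g i) xs, w.1⟫ + w.2.1 i * g i xs,
          fun j => ⟪gradient (h j) xs, w.1⟫) :
          EuclideanSpace ℝ (Fin n) × (Fin m → ℝ) × (Fin p → ℝ))) := by

  classical
  have hlin : IsLinearMap ℝ
      (fun w : EuclideanSpace ℝ (Fin n) × (Fin m → ℝ) × (Fin p → ℝ) =>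
        ((Hess w.1 - ∑ i, w.2.1 i • gradient (g i) xs + ∑ j, w.2.2 j • gradient (h j) xs,
          fun i => ys i * ⟪gradient (g i) xs, w.1⟫ + w.2.1 i * g i xs,
          fun j => ⟪gradient (h j) xs, w.1⟫) :
          EuclideanSpace ℝ (Fin n) × (Fin m → ℝ) × (Fin p → ℝ))) := by
    constructor
    · rintro ⟨v1, dy1, dz1⟩ ⟨v2, dy2, dz2⟩
      refine Prod.ext ?_ (Prod.ext ?_ ?_)
      · simp only [Prod.fst_add, Prod.snd_add, Pi.add_apply, map_add, add_smul,
          Finset.sum_add_distrib]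
        abel
      · funext i
        simp only [Prod.fst_add, Prod.snd_add, Pi.add_apply, inner_add_right]
        ring
      · funext j
        simp only [Prod.fst_add, Prod.snd_add, Pi.add_apply, inner_add_right]
    · rintro c ⟨v, dy, dz⟩
      refine Prod.ext ?_ (Prod.ext ?_ ?_)
      · simp only [Prod.smul_fst, Prod.smul_snd, Pi.smul_apply, map_smul, smul_eq_mul,
          mul_smul, ← Finset.smul_sum, smul_sub, smul_add]
      · funext i
        simp only [Prod.smul_fst, Prod.smul_snd, Pi.smul_apply, real_inner_smul_right,
          smul_eq_mul]
        ring
      · funext j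
        simp only [Prod.smul_fst, Prod.smul_snd, Pi.smul_apply, real_inner_smul_right,
          smul_eq_mul]
  set Phi := IsLinearMap.mk' _ hlin with hPhi
  have hinj : Function.Injective Phi := by
    rw [injective_iff_map_eq_zero]
    rintro ⟨v, dy, dz⟩ hw
    simp only [hPhi, IsLinearMap.mk'_apply, Prod.mk_eq_zero] at hw
    obtain ⟨h1, h2, h3⟩ := hw
    have h2' : ∀ i, ys i * ⟪gradient (g i) xs, v⟫ + dy i * g i xs = 0 := fun i =>
      congrFun h2 i
    have h3' : ∀ j, ⟪gradient (h j) xs, v⟫ = 0 := fun j => congrFun h3 j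
    have hact : ∀ i, g i xs = 0 → ⟪gradient (g i) xs, v⟫ = 0 := by
      intro i hi
      have hy : ys i ≠ 0 := by
        rcases hSC i with ⟨_, hng⟩ | ⟨_, hny⟩
        · exact absurd hi hng
        · exact hny
      have := h2' i
      rw [hi, mul_zero, add_zero] at this
      exact (mul_eq_zero.mp this).resolve_left hy
    have hdy0 : ∀ i, g i xs ≠ 0 → dy i = 0 := by
      intro i hi
      have hy : ys i = 0 := by
        rcases hSC i with ⟨hy0, _⟩ | ⟨hg0, _⟩
        · exact hy0
        · exact absurd hg0 hi
      have := h2' i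
      rw [hy, zero_mul, zero_add] at this
      exact (mul_eq_zero.mp this).resolve_right hi
    have hterm : ∀ i, dy i * ⟪gradient (g i) xs, v⟫ = 0 := by
      intro i
      by_cases hi : g i xs = 0
      · rw [hact i hi, mul_zero]
      · rw [hdy0 i hi, zero_mul]
    have hv0 : v = 0 := by
      by_contra hv
      have hpos := hSOSC v hv (fun i hi _ => hact i hi)
        (fun i hi _ => le_of_eq (hact i hi).symm) h3'
      have hc := congrArg (fun u : EuclideanSpace ℝ (Fin n) => ⟪u, v⟫) h1
      simp only [inner_add_left, inner_sub_left, sum_inner, real_inner_smul_left,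
        inner_zero_left] at hc
      rw [Finset.sum_eq_zero (fun i _ => hterm i),
        Finset.sum_eq_zero (fun j _ => by rw [h3' j, mul_zero])] at hc
      rw [sub_zero, add_zero] at hc
      linarith
    subst hv0
    rw [map_zero, zero_sub] at h1
    have hgsum : ∑ i : {i : Fin m // g i xs = 0}, dy i.1 • gradient (g i.1) xs
        = ∑ i, dy i • gradient (g i) xs := by
      rw [← Finset.sum_filter_of_ne (p := fun i => g i xs = 0)
        (fun i _ hne => by by_contra hgi; exact hne (by rw [hdy0 i hgi, zero_smul]))]
      exact (Finset.sum_subtype (Finset.univ.filter (fun i => g i xs = 0))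
        (fun i => by simp) (fun i => dy i • gradient (g i) xs)).symm
    have hsum : ∑ k : {i : Fin m // g i xs = 0} ⊕ Fin p,
        (Sum.elim (fun i : {i : Fin m // g i xs = 0} => -dy i.1) dz k) •
          (Sum.elim (fun i : {i : Fin m // g i xs = 0} => gradient (g i.1) xs)
            (fun j : Fin p => gradient (h j) xs) k) = 0 := by
      rw [Fintype.sum_sum_type]
      simp only [Sum.elim_inl, Sum.elim_inr, neg_smul, Finset.sum_neg_distrib]
      rw [hgsum]
      exact h1
    have hall := Fintype.linearIndependent_iff.mp hLICQ _ hsum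
    have hdz : ∀ j, dz j = 0 := fun j => hall (Sum.inr j)
    have hdy : ∀ i, dy i = 0 := by
      intro i
      by_cases hi : g i xs = 0
      · have := hall (Sum.inl ⟨i, hi⟩)
        simpa using this
      · exact hdy0 i hi
    refine Prod.ext rfl (Prod.ext ?_ ?_)
    · exact funext hdy
    · exact funext hdz
  have : (fun w : EuclideanSpace ℝ (Fin n) × (Fin m → ℝ) × (Fin p → ℝ) =>
        ((Hess w.1 - ∑ i, w.2.1 i • gradient (g i) xs + ∑ j, w.2.2 j • gradient (h j) xs,
          fun i => ys i * ⟪gradient (g i) xs, w.1⟫ + w.2.1 i * g i xs,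
          fun j => ⟪gradient (h j) xs, w.1⟫) :
          EuclideanSpace ℝ (Fin n) × (Fin m → ℝ) × (Fin p → ℝ))) = ⇑Phi := by
    rw [hPhi]; rfl
  rw [this]
  exact ⟨hinj, (LinearMap.injective_iff_surjective).mp hinj⟩
end

section
/- Let A: V → V be a self-adjoint linear operator on a finite-dimensional inner product space V, let a₁,…,a_m ∈ V, and suppose that ⟨Av, v⟩ > 0 for every nonzero v with ⟨aᵢ, v⟩ = 0 for all i. Then there exist α > 0 and ε > 0 such that ⟨Av, v⟩ + α·∑ᵢ ⟨aᵢ, v⟩² ≥ ε‖v‖² for all v ∈ V. -/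
open scoped RealInnerProductSpace

theorem debreu_aux
    (V : Type*) [NormedAddCommGroup V] [InnerProductSpace ℝ V] [FiniteDimensional ℝ V]
    (g h : V → ℝ) (hgc : Continuous g) (hhc : Continuous h)
    (hgsc : ∀ (c : ℝ) (v : V), g (c • v) = c ^ 2 * g v)
    (hhsc : ∀ (c : ℝ) (v : V), h (c • v) = c ^ 2 * h v)
    (hh0 : ∀ v, 0 ≤ h v)
    (hpos : ∀ v : V, v ≠ 0 → h v = 0 → 0 < g v) :
    ∃ α > (0 : ℝ), ∃ ε > (0 : ℝ), ∀ v : V, ε * ‖v‖ ^ 2 ≤ g v + α * h v := by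
  have hSne0 : ∀ v ∈ Metric.sphere (0 : V) 1, v ≠ 0 := by
    intro v hv h0
    rw [mem_sphere_zero_iff_norm] at hv
    rw [h0] at hv
    simp at hv
  by_cases hne : (Metric.sphere (0 : V) 1).Nonempty
  · have hS : IsCompact (Metric.sphere (0 : V) 1) := isCompact_sphere 0 1
    set K : Set V := Metric.sphere (0 : V) 1 ∩ {v | h v = 0} with hKdef
    have hK : IsCompact K := hS.inter_right (isClosed_eq hhc continuous_const)
    obtain ⟨t, ht, hKt⟩ : ∃ t > (0:ℝ), ∀ v ∈ K, 2 * t ≤ g v := by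
      by_cases hKne : K.Nonempty
      · obtain ⟨v₀, hv₀K, hmin⟩ := hK.exists_isMinOn hKne hgc.continuousOn
        have hv₀ : 0 < g v₀ := hpos v₀ (hSne0 v₀ hv₀K.1) hv₀K.2
        exact ⟨g v₀ / 2, by linarith, fun v hv => by have := isMinOn_iff.mp hmin v hv; linarith⟩
      · exact ⟨1, one_pos, fun v hv => absurd ⟨v, hv⟩ hKne⟩
    set C : Set V := Metric.sphere (0 : V) 1 ∩ {v | g v ≤ t} with hCdef
    have hC : IsCompact C := hS.inter_right (isClosed_le hgc continuous_const)
    obtain ⟨δ, hδ, hCδ⟩ : ∃ δ > (0:ℝ), ∀ v ∈ C, δ ≤ h v := by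
      by_cases hCne : C.Nonempty
      · obtain ⟨v₁, hv₁C, hmin⟩ := hC.exists_isMinOn hCne hhc.continuousOn
        have hv₁ : 0 < h v₁ := by
          rcases (hh0 v₁).lt_or_eq with h1 | h1
          · exact h1
          · exfalso
            have hv₁K : v₁ ∈ K := ⟨hv₁C.1, h1.symm⟩
            have h2 := hKt v₁ hv₁K
            have h3 : g v₁ ≤ t := hv₁C.2
            linarith
        exact ⟨h v₁, hv₁, fun v hv => isMinOn_iff.mp hmin v hv⟩
      · exact ⟨1, one_pos, fun v hv => absurd ⟨v, hv⟩ hCne⟩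
    obtain ⟨v₂, hv₂S, hmg⟩ := hS.exists_isMinOn hne hgc.continuousOn
    refine ⟨1 + max 0 ((t - g v₂) / δ), by have := le_max_left (0:ℝ) ((t - g v₂) / δ); linarith, t, ht, ?_⟩
    set α : ℝ := 1 + max 0 ((t - g v₂) / δ) with hαdef
    have hα : 0 < α := by have := le_max_left (0:ℝ) ((t - g v₂) / δ); simp only [hαdef]; linarith
    have key : ∀ v ∈ Metric.sphere (0 : V) 1, t ≤ g v + α * h v := by
      intro v hvS
      by_cases hc : g v ≤ t
      · have h1 : δ ≤ h v := hCδ v ⟨hvS, hc⟩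
        have h2 : g v₂ ≤ g v := isMinOn_iff.mp hmg v hvS
        have h3 : t - g v₂ ≤ α * h v := by
          by_cases hcase : t - g v₂ ≤ 0
          · nlinarith
          · have h4 : (t - g v₂) / δ ≤ α := by
              have := le_max_right (0:ℝ) ((t - g v₂) / δ)
              linarith
            have h5 : t - g v₂ = ((t - g v₂) / δ) * δ := (div_mul_cancel₀ _ hδ.ne').symm
            rw [h5]
            have h6 : 0 ≤ (t - g v₂) / δ := div_nonneg (by linarith) hδ.le
            calc ((t - g v₂) / δ) * δ ≤ α * δ := by nlinarith
              _ ≤ α * h v := by nlinarith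
        linarith
      · push_neg at hc
        have := mul_nonneg hα.le (hh0 v)
        linarith
    intro v
    by_cases hv : v = 0
    · have hg0 : g 0 = 0 := by
        have := hgsc 0 0
        simpa using this
      have hh0' : h 0 = 0 := by
        have := hhsc 0 0
        simpa using this
      simp [hv, hg0, hh0']
    · have hnv : (0:ℝ) < ‖v‖ := norm_pos_iff.mpr hv
      have hwS : ‖v‖⁻¹ • v ∈ Metric.sphere (0 : V) 1 := by
        rw [mem_sphere_zero_iff_norm, norm_smul, norm_inv, norm_norm]
        exact inv_mul_cancel₀ hnv.ne'
      have hkey := key _ hwS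
      rw [hgsc, hhsc] at hkey
      have h7 : (‖v‖⁻¹) ^ 2 * ‖v‖ ^ 2 = 1 := by
        rw [← mul_pow, inv_mul_cancel₀ hnv.ne']
        norm_num
      have h8 : g v + α * h v = ‖v‖ ^ 2 * ((‖v‖⁻¹) ^ 2 * g v + α * ((‖v‖⁻¹) ^ 2 * h v)) := by
        have : ‖v‖ ^ 2 * ((‖v‖⁻¹) ^ 2 * g v + α * ((‖v‖⁻¹) ^ 2 * h v))
            = ((‖v‖⁻¹) ^ 2 * ‖v‖ ^ 2) * g v + α * (((‖v‖⁻¹) ^ 2 * ‖v‖ ^ 2) * h v) := by ring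
        rw [this, h7]
        ring
      rw [h8, mul_comm t (‖v‖ ^ 2)]
      exact mul_le_mul_of_nonneg_left hkey (sq_nonneg _)
  · refine ⟨1, one_pos, 1, one_pos, ?_⟩
    intro v
    have hv : v = 0 := by
      by_contra hv
      have hnv : (0:ℝ) < ‖v‖ := norm_pos_iff.mpr hv
      exact hne ⟨‖v‖⁻¹ • v, by
        rw [mem_sphere_zero_iff_norm, norm_smul, norm_inv, norm_norm]
        exact inv_mul_cancel₀ hnv.ne'⟩
    have hg0 : g 0 = 0 := by simpa using hgsc 0 0
    have hh0' : h 0 = 0 := by simpa using hhsc 0 0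
    simp [hv, hg0, hh0']

theorem debreu_lemma
    (V : Type*) [NormedAddCommGroup V] [InnerProductSpace ℝ V] [FiniteDimensional ℝ V]
    (A : V →ₗ[ℝ] V) (hA : ∀ u v : V, ⟪A u, v⟫ = ⟪u, A v⟫)
    (m : ℕ) (a : Fin m → V)
    (hpos : ∀ v : V, v ≠ 0 → (∀ i, ⟪a i, v⟫ = 0) → 0 < ⟪A v, v⟫) :
    ∃ α > (0 : ℝ), ∃ ε > (0 : ℝ),
      ∀ v : V, ε * ‖v‖ ^ 2 ≤ ⟪A v, v⟫ + α * ∑ i, ⟪a i, v⟫ ^ 2 := by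
  apply debreu_aux V (fun v => ⟪A v, v⟫) (fun v => ∑ i, ⟪a i, v⟫ ^ 2)
  · exact Continuous.inner (LinearMap.continuous_of_finiteDimensional A) continuous_id
  · exact continuous_finset_sum _ fun i _ =>
      (Continuous.inner continuous_const continuous_id).pow 2
  · intro c v
    simp only [map_smul, real_inner_smul_left, real_inner_smul_right]
    ring
  · intro c v
    simp only [real_inner_smul_right, mul_pow]
    rw [← Finset.mul_sum]
  · exact fun v => Finset.sum_nonneg fun i _ => sq_nonneg _
  · intro v hv hsum
    apply hpos v hv
    intro i
    have := (Finset.sum_eq_zero_iff_of_nonneg (fun j _ => sq_nonneg (⟪a j, v⟫))).mp hsum i (Finset.mem_univ i)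
    exact pow_eq_zero_iff (by norm_num) |>.mp this
end

section
/- Let V be a finite-dimensional inner product space, H: V → V self-adjoint, c ∈ V, Δ > 0, ν ≥ 0, and d* ∈ V such that (H + νI)d* = −c, ν(Δ − ‖d*‖) = 0, ‖d*‖ ≤ Δ, and H + νI is positive semidefinite. Then d* is a global minimizer of q(d) = (1/2)⟨Hd, d⟩ + ⟨c, d⟩ over the ball {d : ‖d‖ ≤ Δ}. -/
open scoped RealInnerProductSpace

/-! The shifted model `q(d) + (ν/2)‖d‖²` has Hessian `H + νI ⪰ 0` and gradient
`(H + νI) d* + c = 0` at `d*`, so `d*` minimizes it on all of `V`. Complementary slackness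
gives `ν‖d‖² ≤ ν Δ² = ν‖d*‖²` on the ball, and removing the shift keeps the inequality. -/

namespace LinearMap

variable {V : Type*} [NormedAddCommGroup V] [InnerProductSpace ℝ V]

noncomputable def quadModel (H : V →ₗ[ℝ] V) (c d : V) : ℝ :=
  (1 / 2) * ⟪H d, d⟫ + ⟪c, d⟫

theorem quadModel_sub {H : V →ₗ[ℝ] V} (hH : H.IsSymmetric) (c x y : V) :
    quadModel H c y - quadModel H c x = (1 / 2) * ⟪H (y - x), y - x⟫ + ⟪H x + c, y - x⟫ := by
  have hyx : ⟪H y, x⟫ = ⟪H x, y⟫ := by rw [hH, real_inner_comm]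
  simp only [quadModel, map_sub, inner_sub_left, inner_sub_right, inner_add_left, hyx]
  ring

theorem quadModel_le_of_stationary {H : V →ₗ[ℝ] V} (hH : H.IsPositive) {c x : V}
    (hx : H x + c = 0) (y : V) : quadModel H c x ≤ quadModel H c y := by
  rw [← sub_nonneg, quadModel_sub hH.isSymmetric, hx, inner_zero_left, add_zero]
  exact mul_nonneg (by norm_num) (hH.inner_nonneg_left _)

theorem quadModel_add_smul_id (H : V →ₗ[ℝ] V) (ν : ℝ) (c d : V) :
    quadModel (H + ν • LinearMap.id) c d = quadModel H c d + ν / 2 * ‖d‖ ^ 2 := by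
  simp only [quadModel, add_apply, smul_apply, id_apply, inner_add_left, real_inner_smul_left,
    real_inner_self_eq_norm_sq]
  ring

end LinearMap

open LinearMap in
theorem trust_region_sufficiency_general
    (V : Type*) [NormedAddCommGroup V] [InnerProductSpace ℝ V]
    (H : V →ₗ[ℝ] V) (hH : ∀ u v : V, ⟪H u, v⟫ = ⟪u, H v⟫)
    (c : V) (Δ : ℝ)
    (ν : ℝ) (hν : 0 ≤ ν)
    (ds : V)
    (heq : H ds + ν • ds = -c)
    (hcompl : ν * (Δ - ‖ds‖) = 0)
    (hpsd : ∀ v : V, 0 ≤ ⟪H v + ν • v, v⟫) :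
    ∀ d : V, ‖d‖ ≤ Δ →
      (1 / 2) * ⟪H ds, ds⟫ + ⟪c, ds⟫ ≤ (1 / 2) * ⟪H d, d⟫ + ⟪c, d⟫ := by
  intro d hd
  have hpos : (H + ν • LinearMap.id).IsPositive :=
    (isPositive_iff _).2 ⟨IsSymmetric.add hH (IsSymmetric.id.smul (conj_trivial ν)), hpsd⟩
  have hmin := quadModel_le_of_stationary hpos (c := c) (x := ds) (by simp [heq]) d
  have hslack : ν * ‖d‖ ^ 2 ≤ ν * ‖ds‖ ^ 2 := by
    rcases hν.eq_or_lt with rfl | hν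
    · simp
    · have hds : ‖ds‖ = Δ := by linarith [(mul_eq_zero.1 hcompl).resolve_left hν.ne']
      rw [hds]
      gcongr
  rw [quadModel_add_smul_id, quadModel_add_smul_id] at hmin
  unfold quadModel at hmin
  linarith

theorem trust_region_sufficiency
    (V : Type*) [NormedAddCommGroup V] [InnerProductSpace ℝ V] [FiniteDimensional ℝ V]
    (H : V →ₗ[ℝ] V) (hH : ∀ u v : V, ⟪H u, v⟫ = ⟪u, H v⟫)
    (c : V) (Δ : ℝ) (hΔ : 0 < Δ)
    (ν : ℝ) (hν : 0 ≤ ν)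
    (ds : V)
    (heq : H ds + ν • ds = -c)
    (hcompl : ν * (Δ - ‖ds‖) = 0)
    (hle : ‖ds‖ ≤ Δ)
    (hpsd : ∀ v : V, 0 ≤ ⟪H v + ν • v, v⟫) :
    ∀ d : V, ‖d‖ ≤ Δ →
      (1 / 2) * ⟪H ds, ds⟫ + ⟪c, ds⟫ ≤ (1 / 2) * ⟪H d, d⟫ + ⟪c, d⟫ :=
  trust_region_sufficiency_general V H hH c Δ ν hν ds heq hcompl hpsd
end

section
/- Let A, G: [0,∞) → finite-dimensional self-adjoint operators on an inner product space V with A continuous, A(0) positive definite on the kernel of linear functionals a₁,…,a_m (SOSC-type condition), and suppose H(t) := A(t) + ∑ᵢ (yᵢ(t)/sᵢ(t))·aᵢ(t) ⊗ aᵢ(t)* where for active indices i the ratio yᵢ(t)/sᵢ(t) → +∞ as t → 0, the vectors aᵢ(t) → aᵢ, A(t) → A(0), and for inactive indices the ratios stay bounded and nonnegative. Then H(t) is positive definite for all t sufficiently small. -/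
open Filter Topology
open scoped RealInnerProductSpace

set_option maxHeartbeats 1000000 in
theorem condensed_hessian_positive_definite
    (V : Type*) [NormedAddCommGroup V] [InnerProductSpace ℝ V] [FiniteDimensional ℝ V]
    (m : ℕ) (act : Fin m → Prop)
    (A : ℝ → (V →L[ℝ] V)) (a : ℝ → Fin m → V) (r : ℝ → Fin m → ℝ)
    (a0 : Fin m → V)
    (hAcont : Continuous A)
    (hAsym : ∀ t (u v : V), ⟪A t u, v⟫ = ⟪u, A t v⟫)
    -- SOSC-type condition: A(0) positive definite on the kernel of the active aᵢ
    (hSOSC : ∀ v : V, v ≠ 0 → (∀ i, act i → ⟪a0 i, v⟫ = 0) → 0 < ⟪A 0 v, v⟫)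
    -- the vectors aᵢ(t) converge to aᵢ as t → 0⁺
    (haconv : ∀ i, Tendsto (fun t => a t i) (𝓝[>] (0 : ℝ)) (𝓝 (a0 i)))
    -- for active indices the ratios blow up
    (hact : ∀ i, act i → Tendsto (fun t => r t i) (𝓝[>] (0 : ℝ)) atTop)
    -- for inactive indices the ratios stay bounded and nonnegative
    (hinact : ∀ i, ¬ act i → ∃ B : ℝ,
      ∀ᶠ t in 𝓝[>] (0 : ℝ), 0 ≤ r t i ∧ r t i ≤ B) :
    ∀ᶠ t in 𝓝[>] (0 : ℝ), ∀ v : V, v ≠ 0 →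
      0 < ⟪A t v + ∑ i, (r t i * ⟪a t i, v⟫) • a t i, v⟫ := by
  classical
  by_cases hV : ∀ v : V, v = 0
  · filter_upwards with t v hv
    exact absurd (hV v) hv
  push_neg at hV
  obtain ⟨v₀, hv₀⟩ := hV
  set F : Finset (Fin m) := Finset.univ.filter act with hFdef
  set Q : V → ℝ := fun v => ⟪A 0 v, v⟫ with hQdef
  set S : V → ℝ := fun v => ∑ i ∈ F, ⟪a0 i, v⟫ ^ 2 with hSdef
  have hQcont : Continuous Q := (A 0).continuous.inner continuous_id
  have hScont : Continuous S := by
    apply continuous_finset_sum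
    intro i _
    exact (continuous_const.inner continuous_id).pow 2
  have hSnonneg : ∀ v, 0 ≤ S v := fun v => Finset.sum_nonneg fun i _ => sq_nonneg _
  -- Debreu's lemma
  have hmu : ∃ μ : ℝ, 0 < μ ∧ ∀ v ∈ Metric.sphere (0 : V) 1, 0 < Q v + μ * S v := by
    by_contra hcon
    push_neg at hcon
    choose! w hw1 hw2 using fun n : ℕ => hcon ((n : ℝ) + 1) (by positivity)
    obtain ⟨v, hvs, φ, hφ, hφt⟩ := (isCompact_sphere (0 : V) 1).tendsto_subseq hw1
    have hvne : v ≠ 0 := by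
      have : ‖v‖ = 1 := by simpa using hvs
      intro h; rw [h] at this; simp at this
    have hQt : Tendsto (fun n => Q (w (φ n))) atTop (𝓝 (Q v)) := (hQcont.tendsto v).comp hφt
    have hSt : Tendsto (fun n => S (w (φ n))) atTop (𝓝 (S v)) := (hScont.tendsto v).comp hφt
    have hQle : Q v ≤ 0 := by
      apply le_of_tendsto hQt
      filter_upwards with n
      have h2 := hw2 (φ n)
      nlinarith [hSnonneg (w (φ n)), (Nat.cast_nonneg (φ n) : (0:ℝ) ≤ (φ n : ℝ))]
    have hS0 : S v = 0 := by
      set C : ℝ := |Q v| + 1 with hCdef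
      have hCpos : 0 < C := by positivity
      have habs : ∀ᶠ n in atTop, |Q (w (φ n))| < C := by
        have : Tendsto (fun n => |Q (w (φ n))|) atTop (𝓝 |Q v|) := hQt.abs
        exact this.eventually_lt_const (by simp [hCdef])
      have hSzero : Tendsto (fun n => S (w (φ n))) atTop (𝓝 0) := by
        refine squeeze_zero' (f := fun n : ℕ => S (w (φ n)))
          (g := fun n : ℕ => C * (1 / ((n : ℝ) + 1))) (t₀ := atTop)
          (Filter.Eventually.of_forall fun n => hSnonneg _) ?_ ?_
        · filter_upwards [habs] with n hn
          have h2 := hw2 (φ n)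
          have hle : (n : ℝ) ≤ (φ n : ℝ) := by exact_mod_cast hφ.le_apply
          rw [mul_one_div, le_div_iff₀ (by positivity)]
          have hSn := hSnonneg (w (φ n))
          have habs' := abs_le.mp hn.le
          nlinarith [mul_le_mul_of_nonneg_left hle hSn]
        · simpa using tendsto_one_div_add_atTop_nhds_zero_nat.const_mul C
      exact tendsto_nhds_unique hSt hSzero
    have hker : ∀ i, act i → ⟪a0 i, v⟫ = 0 := by
      intro i hi
      have hmem : i ∈ F := by simp [hFdef, hi]
      have := (Finset.sum_eq_zero_iff_of_nonneg (fun j _ => sq_nonneg ⟪a0 j, v⟫)).mp hS0 i hmem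
      exact pow_eq_zero_iff (two_ne_zero) |>.mp this
    exact absurd (hSOSC v hvne hker) (not_lt.mpr hQle)
  obtain ⟨μ, hμpos, hμ⟩ := hmu
  -- minimum over the sphere
  have hsne : (Metric.sphere (0 : V) 1).Nonempty := by
    refine ⟨‖v₀‖⁻¹ • v₀, ?_⟩
    rw [mem_sphere_zero_iff_norm, norm_smul, norm_inv, norm_norm,
      inv_mul_cancel₀ (norm_ne_zero_iff.mpr hv₀)]
  obtain ⟨v₁, hv₁s, hmin⟩ := (isCompact_sphere (0 : V) 1).exists_isMinOn hsne
    ((hQcont.add (continuous_const.mul hScont)).continuousOn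
      (f := fun v => Q v + μ * S v))
  obtain ⟨ε, hεpos, hmin⟩ : ∃ ε : ℝ, 0 < ε ∧ ∀ w ∈ Metric.sphere (0 : V) 1,
      ε ≤ Q w + μ * S w :=
    ⟨Q v₁ + μ * S v₁, hμ v₁ hv₁s, fun w hw => hmin hw⟩
  -- homogeneous lower bound
  have hεle : ∀ v : V, ε * ‖v‖ ^ 2 ≤ Q v + μ * S v := by
    intro v
    by_cases hv : v = 0
    · simp [hv, hQdef, hSdef]
    · have hcpos : 0 < ‖v‖ := norm_pos_iff.mpr hv
      have hus : ‖v‖⁻¹ • v ∈ Metric.sphere (0 : V) 1 := by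
        rw [mem_sphere_zero_iff_norm, norm_smul, norm_inv, norm_norm,
          inv_mul_cancel₀ hcpos.ne']
      have hmin' : ε ≤ Q (‖v‖⁻¹ • v) + μ * S (‖v‖⁻¹ • v) := hmin _ hus
      have hQhom : Q (‖v‖⁻¹ • v) = ‖v‖⁻¹ ^ 2 * Q v := by
        simp only [hQdef, map_smul, real_inner_smul_left, real_inner_smul_right]
        ring
      have hShom : S (‖v‖⁻¹ • v) = ‖v‖⁻¹ ^ 2 * S v := by
        simp only [hSdef, real_inner_smul_right, Finset.mul_sum]
        exact Finset.sum_congr rfl fun i _ => by ring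
      rw [hQhom, hShom] at hmin'
      have hinv : ‖v‖⁻¹ ^ 2 * ‖v‖ ^ 2 = 1 := by
        field_simp
      calc ε * ‖v‖ ^ 2
          ≤ (‖v‖⁻¹ ^ 2 * Q v + μ * (‖v‖⁻¹ ^ 2 * S v)) * ‖v‖ ^ 2 :=
            mul_le_mul_of_nonneg_right hmin' (sq_nonneg _)
        _ = (‖v‖⁻¹ ^ 2 * ‖v‖ ^ 2) * Q v + μ * ((‖v‖⁻¹ ^ 2 * ‖v‖ ^ 2) * S v) := by ring
        _ = Q v + μ * S v := by rw [hinv]; ring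
  -- choice of δ
  set M : ℝ := ε / (4 * (m + 1)) with hMdef
  have hMpos : 0 < M := by positivity
  set δ : Fin m → ℝ := fun i => min 1 (M / (μ * (1 + 2 * ‖a0 i‖))) with hδdef
  have hδpos : ∀ i, 0 < δ i := fun i => lt_min one_pos (by positivity)
  have hδkey : ∀ i, μ * (δ i * (δ i + 2 * ‖a0 i‖)) ≤ M := by
    intro i
    have h1 : δ i ≤ 1 := min_le_left _ _
    have h2 : δ i ≤ M / (μ * (1 + 2 * ‖a0 i‖)) := min_le_right _ _
    have h3 : (0:ℝ) < μ * (1 + 2 * ‖a0 i‖) := by positivity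
    rw [le_div_iff₀ h3] at h2
    nlinarith [(hδpos i).le, norm_nonneg (a0 i), hμpos.le]
  -- eventual facts
  have hAev : ∀ᶠ t in 𝓝[>] (0:ℝ), ‖A t - A 0‖ < ε / 4 := by
    have h1 : Tendsto (fun t => ‖A t - A 0‖) (𝓝 (0:ℝ)) (𝓝 0) := by
      have := ((hAcont.tendsto 0).sub (tendsto_const_nhds (x := A 0))).norm
      simpa using this
    exact (h1.mono_left nhdsWithin_le_nhds).eventually_lt_const (by positivity)
  have haev : ∀ᶠ t in 𝓝[>] (0:ℝ), ∀ i, act i → (μ ≤ r t i ∧ ‖a t i - a0 i‖ ≤ δ i) := by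
    rw [eventually_all]
    intro i
    by_cases hi : act i
    · have h1 := (hact i hi).eventually_ge_atTop μ
      have h2 : ∀ᶠ t in 𝓝[>] (0:ℝ), ‖a t i - a0 i‖ < δ i := by
        have := ((haconv i).sub (tendsto_const_nhds (x := a0 i))).norm
        simp only [sub_self, norm_zero] at this
        exact this.eventually_lt_const (hδpos i)
      filter_upwards [h1, h2] with t ht1 ht2 _
      exact ⟨ht1, ht2.le⟩
    · filter_upwards with t h
      exact absurd h hi
  have hrev : ∀ᶠ t in 𝓝[>] (0:ℝ), ∀ i, ¬ act i → 0 ≤ r t i := by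
    rw [eventually_all]
    intro i
    by_cases hi : act i
    · filter_upwards with t h
      exact absurd hi h
    · obtain ⟨B, hB⟩ := hinact i hi
      filter_upwards [hB] with t ht _
      exact ht.1
  -- conclusion
  filter_upwards [hAev, haev, hrev] with t htA hta htr
  intro v hv
  have hexp : ⟪A t v + ∑ i, (r t i * ⟪a t i, v⟫) • a t i, v⟫
      = ⟪A t v, v⟫ + ∑ i, r t i * ⟪a t i, v⟫ ^ 2 := by
    rw [inner_add_left, sum_inner]
    congr 1
    refine Finset.sum_congr rfl fun i _ => ?_
    rw [real_inner_smul_left]; ring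
  rw [hexp]
  -- bound the A-part
  have hA : Q v - (ε / 4) * ‖v‖ ^ 2 ≤ ⟪A t v, v⟫ := by
    have h1 : |⟪A t v - A 0 v, v⟫| ≤ ‖A t - A 0‖ * ‖v‖ ^ 2 := by
      calc |⟪A t v - A 0 v, v⟫| ≤ ‖A t v - A 0 v‖ * ‖v‖ := abs_real_inner_le_norm _ _
        _ = ‖(A t - A 0) v‖ * ‖v‖ := by rw [ContinuousLinearMap.sub_apply]
        _ ≤ (‖A t - A 0‖ * ‖v‖) * ‖v‖ :=
            mul_le_mul_of_nonneg_right ((A t - A 0).le_opNorm v) (norm_nonneg v)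
        _ = ‖A t - A 0‖ * ‖v‖ ^ 2 := by ring
    have h2 : ⟪A t v - A 0 v, v⟫ = ⟪A t v, v⟫ - Q v := by
      rw [inner_sub_left]
    rw [h2] at h1
    have h3 := (abs_le.mp h1).1
    nlinarith [mul_le_mul_of_nonneg_right htA.le (sq_nonneg ‖v‖)]
  -- per active index bound
  have hterm : ∀ i ∈ F, μ * ⟪a0 i, v⟫ ^ 2 - M * ‖v‖ ^ 2 ≤ r t i * ⟪a t i, v⟫ ^ 2 := by
    intro i hiF
    have hi : act i := by
      simpa [hFdef] using hiF
    obtain ⟨hr, hna⟩ := hta i hi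
    have hna' : ‖a0 i - a t i‖ ≤ δ i := by rw [norm_sub_rev]; exact hna
    have hnle : ‖a0 i + a t i‖ ≤ δ i + 2 * ‖a0 i‖ := by
      have h4 : ‖a t i‖ - ‖a0 i‖ ≤ ‖a t i - a0 i‖ := norm_sub_norm_le _ _
      have h5 := norm_add_le (a0 i) (a t i)
      linarith
    have hA1 : |⟪a0 i - a t i, v⟫| ≤ δ i * ‖v‖ :=
      (abs_real_inner_le_norm _ _).trans (mul_le_mul_of_nonneg_right hna' (norm_nonneg v))
    have hA2 : |⟪a0 i + a t i, v⟫| ≤ (δ i + 2 * ‖a0 i‖) * ‖v‖ :=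
      (abs_real_inner_le_norm _ _).trans (mul_le_mul_of_nonneg_right hnle (norm_nonneg v))
    have hfact : ⟪a0 i, v⟫ ^ 2 - ⟪a t i, v⟫ ^ 2
        = ⟪a0 i - a t i, v⟫ * ⟪a0 i + a t i, v⟫ := by
      rw [inner_sub_left, inner_add_left]; ring
    have hprod : ⟪a0 i - a t i, v⟫ * ⟪a0 i + a t i, v⟫
        ≤ (δ i * ‖v‖) * ((δ i + 2 * ‖a0 i‖) * ‖v‖) := by
      calc ⟪a0 i - a t i, v⟫ * ⟪a0 i + a t i, v⟫
          ≤ |⟪a0 i - a t i, v⟫ * ⟪a0 i + a t i, v⟫| := le_abs_self _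
        _ = |⟪a0 i - a t i, v⟫| * |⟪a0 i + a t i, v⟫| := abs_mul _ _
        _ ≤ (δ i * ‖v‖) * ((δ i + 2 * ‖a0 i‖) * ‖v‖) :=
            mul_le_mul hA1 hA2 (abs_nonneg _) (by positivity)
    have hdiff : μ * (⟪a0 i, v⟫ ^ 2 - ⟪a t i, v⟫ ^ 2) ≤ M * ‖v‖ ^ 2 := by
      calc μ * (⟪a0 i, v⟫ ^ 2 - ⟪a t i, v⟫ ^ 2)
          = μ * (⟪a0 i - a t i, v⟫ * ⟪a0 i + a t i, v⟫) := by rw [hfact]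
        _ ≤ μ * ((δ i * ‖v‖) * ((δ i + 2 * ‖a0 i‖) * ‖v‖)) :=
            mul_le_mul_of_nonneg_left hprod hμpos.le
        _ = (μ * (δ i * (δ i + 2 * ‖a0 i‖))) * ‖v‖ ^ 2 := by ring
        _ ≤ M * ‖v‖ ^ 2 := mul_le_mul_of_nonneg_right (hδkey i) (sq_nonneg _)
    have hmu_le : μ * ⟪a t i, v⟫ ^ 2 ≤ r t i * ⟪a t i, v⟫ ^ 2 :=
      mul_le_mul_of_nonneg_right hr (sq_nonneg _)
    nlinarith
  -- sum bound
  have hsum : μ * S v - (ε / 4) * ‖v‖ ^ 2 ≤ ∑ i, r t i * ⟪a t i, v⟫ ^ 2 := by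
    have hsub : ∑ i ∈ F, r t i * ⟪a t i, v⟫ ^ 2 ≤ ∑ i, r t i * ⟪a t i, v⟫ ^ 2 := by
      apply Finset.sum_le_sum_of_subset_of_nonneg (Finset.subset_univ F)
      intro i _ hiF
      have hi : ¬ act i := by simpa [hFdef] using hiF
      exact mul_nonneg (htr i hi) (sq_nonneg _)
    have hFle : μ * S v - (F.card : ℝ) * (M * ‖v‖ ^ 2) ≤ ∑ i ∈ F, r t i * ⟪a t i, v⟫ ^ 2 := by
      have := Finset.sum_le_sum hterm
      rw [Finset.sum_sub_distrib, Finset.sum_const, ← Finset.mul_sum, nsmul_eq_mul] at this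
      rw [hSdef]
      exact this
    have hcard : (F.card : ℝ) ≤ m := by
      exact_mod_cast (Finset.card_le_univ F).trans_eq (Finset.card_fin m)
    have hcardM : (F.card : ℝ) * (M * ‖v‖ ^ 2) ≤ (ε / 4) * ‖v‖ ^ 2 := by
      have : (F.card : ℝ) * M ≤ ((m : ℝ) + 1) * M :=
        mul_le_mul_of_nonneg_right (by linarith) hMpos.le
      calc (F.card : ℝ) * (M * ‖v‖ ^ 2) = ((F.card : ℝ) * M) * ‖v‖ ^ 2 := by ring
        _ ≤ (((m : ℝ) + 1) * M) * ‖v‖ ^ 2 := mul_le_mul_of_nonneg_right this (sq_nonneg _)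
        _ = (ε / 4) * ‖v‖ ^ 2 := by
            rw [hMdef]
            have hm1 : ((m : ℝ) + 1) ≠ 0 := by positivity
            field_simp
    linarith [hsub, hFle]
  have hv2 : 0 < ‖v‖ ^ 2 := pow_pos (norm_pos_iff.mpr hv) 2
  nlinarith [hεle v, mul_pos hεpos hv2]
end

section
/- Let F: ℝᴺ × ℝ → ℝᴺ be C¹ with F(ω*, 0) = 0 and D_ω F(ω*, 0) nonsingular, and suppose iterates ω_{k+1} and barrier parameters μ_k > 0 satisfy ‖F(ω_{k+1}, μ_k)‖ ≤ ε_k·μ_k with ε_k → 0 and ω_{k+1} → ω*, μ_k → 0. If moreover ∂F/∂μ(ω*, 0) ≠ 0 maps into the range appropriately so that ω̇ := −D_ωF(ω*,0)⁻¹ ∂_μF(ω*,0) ≠ 0, then ‖ω_{k+1} − ω*‖ = Θ(μ_k): there exist constants 0 < c₁ ≤ c₂ with c₁μ_k ≤ ‖ω_{k+1} − ω*‖ ≤ c₂μ_k for all k large. -/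
/-!
Write `δₖ = ωₖ₊₁ − ω*` and `L = DF(ω*, 0)`. Since `F(ω*, 0) = 0`, differentiability at `(ω*, 0)`
together with the residual bound `‖F(ωₖ₊₁, μₖ)‖ = o(μₖ)` gives `L(δₖ, μₖ) = o(‖δₖ‖ + μₖ)`.
Applying the inverse of the `ω`-block `A` of `L` turns this into `δₖ + μₖ v = o(‖δₖ‖ + μₖ)` with
`v = A⁻¹ ∂_μF(ω*, 0) = −ω̇ ≠ 0`. Absorbing the error term into `‖δₖ‖` (resp. `μₖ‖v‖`) gives
`‖δₖ‖ = O(μₖ)` (resp. `μₖ = O(‖δₖ‖)`).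
-/

open Filter Topology Asymptotics

theorem Asymptotics.IsTheta.exists_bounds {α E F : Type*} [NormedAddCommGroup E]
    [NormedAddCommGroup F] {l : Filter α} {f : α → E} {g : α → F} (h : f =Θ[l] g) :
    ∃ c₁ c₂ : ℝ, 0 < c₁ ∧ c₁ ≤ c₂ ∧
      ∀ᶠ x in l, c₁ * ‖g x‖ ≤ ‖f x‖ ∧ ‖f x‖ ≤ c₂ * ‖g x‖ := by
  obtain ⟨c₂, -, hup⟩ := h.1.exists_pos
  obtain ⟨c, hc, hlow⟩ := h.2.exists_pos
  refine ⟨c⁻¹, max c⁻¹ c₂, inv_pos.2 hc, le_max_left _ _, ?_⟩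
  filter_upwards [hlow.bound, hup.bound] with x hgf hfg
  exact ⟨(inv_mul_le_iff₀ hc).2 hgf,
    hfg.trans (mul_le_mul_of_nonneg_right (le_max_right _ _) (norm_nonneg _))⟩

section

variable {α E G : Type*} [NormedAddCommGroup E] [NormedSpace ℝ E]
  [NormedAddCommGroup G] [NormedSpace ℝ G] {l : Filter α}

theorem isTheta_of_add_smul_isLittleO {δ : α → E} {μ : α → ℝ} {v : E} (hv : v ≠ 0)
    (h : (fun k => δ k + μ k • v) =o[l] fun k => (δ k, μ k)) : δ =Θ[l] μ := by
  have hv_pos : 0 < ‖v‖ := norm_pos_iff.mpr hv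
  have hnorm : ∀ k, ‖(δ k, μ k)‖ ≤ ‖δ k‖ + ‖μ k‖ := fun k =>
    norm_prod_le_iff.mpr
      ⟨le_add_of_nonneg_right (norm_nonneg _), le_add_of_nonneg_left (norm_nonneg _)⟩
  have hsmul : ∀ k, ‖μ k • v‖ = ‖μ k‖ * ‖v‖ := fun k => norm_smul _ _
  constructor
  · refine IsBigO.of_bound (1 + 2 * ‖v‖) ?_
    filter_upwards [h.def one_half_pos] with k hk
    have htri : ‖δ k‖ ≤ ‖δ k + μ k • v‖ + ‖μ k • v‖ := norm_le_add_norm_add _ _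
    nlinarith [hnorm k, hsmul k, norm_nonneg (μ k)]
  · refine IsBigO.of_bound (1 + 2 / ‖v‖) ?_
    filter_upwards [h.def (half_pos hv_pos)] with k hk
    have htri : ‖μ k • v‖ ≤ ‖δ k + μ k • v‖ + ‖δ k‖ := by
      simpa using norm_sub_le (δ k + μ k • v) (δ k)
    rw [one_add_div hv_pos.ne', div_mul_eq_mul_div, le_div_iff₀ hv_pos]
    nlinarith [hnorm k, hsmul k, norm_nonneg (δ k)]

theorem HasFDerivAt.isLittleO_apply_of_isLittleO_residual {F : E × ℝ → G}
    {L : E × ℝ →L[ℝ] G} {x₀ : E} (hL : HasFDerivAt F L (x₀, 0)) (hF0 : F (x₀, 0) = 0)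
    {ω : α → E} {μ : α → ℝ} (hω : Tendsto ω l (𝓝 x₀)) (hμ : Tendsto μ l (𝓝 0))
    (hres : (fun k => F (ω k, μ k)) =o[l] μ) :
    (fun k => L (ω k - x₀, μ k)) =o[l] fun k => (ω k - x₀, μ k) := by
  have hrem := hL.isLittleO.comp_tendsto (hω.prodMk_nhds hμ)
  simp only [Function.comp_def, hF0, sub_zero, Prod.mk_sub_mk] at hrem
  refine ((hres.trans_isBigO isBigO_snd_prod).sub hrem).congr_left fun k => ?_
  abel

theorem ContinuousLinearEquiv.symm_apply_eq_add_smul (A : E ≃L[ℝ] G) {L : E × ℝ →L[ℝ] G}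
    (hLA : L.comp (.inl ℝ E ℝ) = A) (x : E) (t : ℝ) :
    A.symm (L (x, t)) = x + t • A.symm (L (0, 1)) := by
  have hx : L (x, 0) = A x := by simpa using congrArg (· x) hLA
  rw [A.symm_apply_eq, map_add, map_smul, A.apply_symm_apply, ← hx, ← L.map_smul, ← L.map_add]
  simp

theorem HasFDerivAt.isTheta_sub_of_isLittleO_residual [CompleteSpace E] [CompleteSpace G]
    {F : E × ℝ → G} {L : E × ℝ →L[ℝ] G} {x₀ : E}
    (hL : HasFDerivAt F L (x₀, 0)) (hF0 : F (x₀, 0) = 0)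
    (hA : Function.Bijective (L.comp (.inl ℝ E ℝ))) (hb : L (0, 1) ≠ 0)
    {ω : α → E} {μ : α → ℝ} (hω : Tendsto ω l (𝓝 x₀)) (hμ : Tendsto μ l (𝓝 0))
    (hres : (fun k => F (ω k, μ k)) =o[l] μ) :
    (fun k => ω k - x₀) =Θ[l] μ := by
  set A := ContinuousLinearEquiv.ofBijective (L.comp (.inl ℝ E ℝ))
    (LinearMap.ker_eq_bot.mpr hA.1) (LinearMap.range_eq_top.mpr hA.2)
  have hv : A.symm (L (0, 1)) ≠ 0 := (map_ne_zero_iff _ A.symm.injective).2 hb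
  refine isTheta_of_add_smul_isLittleO hv ?_
  have hlin := (A.symm : G →L[ℝ] E).isBigO_comp _ l |>.trans_isLittleO
    (hL.isLittleO_apply_of_isLittleO_residual hF0 hω hμ hres)
  exact hlin.congr_left fun k => A.symm_apply_eq_add_smul rfl _ _

end

theorem central_path_tight_estimate
    (N : ℕ)
    (F : EuclideanSpace ℝ (Fin N) × ℝ → EuclideanSpace ℝ (Fin N))
    (hF : ContDiff ℝ 1 F)
    (ωs : EuclideanSpace ℝ (Fin N))
    (hF0 : F (ωs, 0) = 0)
    (hDω : Function.Bijective (fderiv ℝ (fun ω => F (ω, 0)) ωs))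
    -- nonvanishing central-path tangent: ∂_μ F(ω*,0) ≠ 0
    (hDμ : fderiv ℝ (fun μ : ℝ => F (ωs, μ)) 0 1 ≠ 0)
    (ω : ℕ → EuclideanSpace ℝ (Fin N)) (μ ε : ℕ → ℝ)
    (hμpos : ∀ k, 0 < μ k)
    (hres : ∀ k, ‖F (ω (k + 1), μ k)‖ ≤ ε k * μ k)
    (hε : Tendsto ε atTop (𝓝 0))
    (hωconv : Tendsto ω atTop (𝓝 ωs))
    (hμconv : Tendsto μ atTop (𝓝 0)) :
    ∃ c₁ c₂ : ℝ, 0 < c₁ ∧ c₁ ≤ c₂ ∧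
      ∃ K : ℕ, ∀ k ≥ K,
        c₁ * μ k ≤ ‖ω (k + 1) - ωs‖ ∧ ‖ω (k + 1) - ωs‖ ≤ c₂ * μ k := by
  have hL := (hF.differentiable one_ne_zero (ωs, 0)).hasFDerivAt
  rw [HasFDerivAt.fderiv (f := fun ω => F (ω, 0))
    (hL.comp ωs (hasFDerivAt_prodMk_left ωs (0 : ℝ)))] at hDω
  rw [HasFDerivAt.fderiv (f := fun μ => F (ωs, μ))
    (hL.comp (0 : ℝ) (hasFDerivAt_prodMk_right ωs (0 : ℝ)))] at hDμ
  have hεμ : (fun k => ε k * μ k) =o[atTop] μ := by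
    simpa using ((isLittleO_one_iff ℝ).2 hε).mul_isBigO (isBigO_refl μ atTop)
  have hres' : (fun k => F (ω (k + 1), μ k)) =o[atTop] μ :=
    (IsBigO.of_bound' (.of_forall fun k => (hres k).trans (Real.le_norm_self _))).trans_isLittleO
      hεμ
  obtain ⟨c₁, c₂, hc₁, hc₁₂, hbounds⟩ := (hL.isTheta_sub_of_isLittleO_residual hF0 hDω
    (by simpa using hDμ) (hωconv.comp (tendsto_add_atTop_nat 1)) hμconv hres').exists_bounds
  obtain ⟨K, hK⟩ := eventually_atTop.1 hbounds
  refine ⟨c₁, c₂, hc₁, hc₁₂, K, fun k hk => ?_⟩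
  simpa [Real.norm_of_nonneg (hμpos k).le] using hK k hk
end
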